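/- For 0 ≤ i ≤ n, the dual Bernstein polynomial admits the short expansion D^n_i(x; α, β) = [(-1)^{n-i} (σ+1)_n / (B(α+1,β+1) (α+1)_{n-i} (β+1)_i)] · Σ_{j=0}^{i} ((-i)_j / (-n)_j) · R_{n-j}^{(α, β+j+1)}(x), where σ = α+β+1. -/

import Mathlib

open Finset

/-- Pochhammer symbol `(c)_k = c (c+1) ⋯ (c+k-1)`. -/
noncomputable def poch (c : ℝ) (k : ℕ) : ℝ := ∏ j ∈ Finset.range k, (c + j)

/-- Bernstein polynomial `B^n_i(x)`. -/
noncomputable def bern (n i : ℕ) (x : ℝ) : ℝ := (n.choose i : ℝ) * x ^ i * (1 - x) ^ (n - i)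

/-- Jacobi inner product on [0,1]. -/
noncomputable def jip (α β : ℝ) (f g : ℝ → ℝ) : ℝ :=
  ∫ x in (0:ℝ)..1, (1 - x) ^ α * x ^ β * f x * g x

/-- Beta function `B(a,b) = Γ(a)Γ(b)/Γ(a+b)`. -/
noncomputable def betaF (a b : ℝ) : ℝ := Real.Gamma a * Real.Gamma b / Real.Gamma (a + b)

/-- Hahn polynomial `Q_m(x; α, β, N)` as a terminating ₃F₂ sum. -/
noncomputable def hahn (m : ℕ) (x : ℝ) (α β : ℝ) (N : ℕ) : ℝ :=
  ∑ k ∈ Finset.range (m + 1),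
    poch (-(m : ℝ)) k * poch ((m : ℝ) + α + β + 1) k * poch (-x) k /
      ((k.factorial : ℝ) * poch (α + 1) k * poch (-(N : ℝ)) k)

/-- Shifted Jacobi polynomial `R_m^{(α,β)}(x)`. -/
noncomputable def sjac (m : ℕ) (α β : ℝ) (x : ℝ) : ℝ :=
  (poch (α + 1) m / (m.factorial : ℝ)) *
    ∑ k ∈ Finset.range (m + 1),
      poch (-(m : ℝ)) k * poch ((m : ℝ) + α + β + 1) k /
        ((k.factorial : ℝ) * poch (α + 1) k) * (1 - x) ^ k

/-!
Both sides are polynomials of degree at most `n`, and the Jacobi inner product is positive definite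
on polynomials, so it suffices to compare the moments `⟨·, xᵗ⟩` for `t ≤ n`. Expanding
`C(n,t) xᵗ = ∑ₖ C(k,t) Bⁿₖ` in the Bernstein basis, duality forces `⟨D, xᵗ⟩ = C(i,t) / C(n,t)`.
On the other side, integrating the `₂F₁` series of `R_{n-j}^{(α,β+j+1)}` termwise against `xᵗ`
gives Beta integrals summed by Chu–Vandermonde; the result vanishes for `j < t`, and the remaining
sum over `j` is again a Chu–Vandermonde sum, which also evaluates to `C(i,t) / C(n,t)`.
-/

open Polynomial MeasureTheory

lemma poch_succ (c : ℝ) (k : ℕ) : poch c (k + 1) = poch c k * (c + k) := prod_range_succ _ _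

lemma poch_eq_eval_ascPochhammer (c : ℝ) (k : ℕ) : poch c k = (ascPochhammer ℝ k).eval c := by
  induction k with
  | zero => simp [poch]
  | succ k ih => rw [poch_succ, ih, ascPochhammer_succ_eval]

lemma poch_add_nat (c : ℝ) (k l : ℕ) : poch c (k + l) = poch c k * poch (c + k) l := by
  simp only [poch, prod_range_add, add_assoc, Nat.cast_add]

lemma poch_pos {c : ℝ} (hc : 0 < c) (k : ℕ) : 0 < poch c k := by
  rw [poch_eq_eval_ascPochhammer]
  exact ascPochhammer_pos k c hc

lemma poch_ne_zero_of_le {c : ℝ} {l m : ℕ} (hlm : l ≤ m) (hc : poch c m ≠ 0) : poch c l ≠ 0 := by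
  rw [← Nat.add_sub_cancel' hlm, poch_add_nat] at hc
  exact left_ne_zero_of_mul hc

lemma poch_neg (c : ℝ) (k : ℕ) : poch (-c) k = (-1) ^ k * (descPochhammer ℝ k).eval c := by
  rw [poch_eq_eval_ascPochhammer, ascPochhammer_eval_neg_eq_descPochhammer]

lemma poch_neg_natCast (m l : ℕ) : poch (-(m : ℝ)) l = (-1) ^ l * m.descFactorial l := by
  rw [poch_neg, descPochhammer_eval_eq_descFactorial]

lemma poch_neg_natCast_of_le {m l : ℕ} (h : l ≤ m) :
    poch (-(m : ℝ)) l = (-1) ^ l * m.factorial / (m - l).factorial := by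
  rw [poch_neg_natCast, ← Nat.factorial_mul_descFactorial h]
  push_cast
  field_simp

lemma poch_neg_natCast_of_lt {m l : ℕ} (h : m < l) : poch (-(m : ℝ)) l = 0 := by
  rw [poch_neg_natCast, Nat.descFactorial_eq_zero_iff_lt.mpr h]
  simp

lemma Real.Gamma_add_natCast {c : ℝ} (hc : 0 < c) (k : ℕ) :
    Real.Gamma (c + k) = Real.Gamma c * poch c k := by
  induction k with
  | zero => simp [poch]
  | succ k ih =>
    rw [Nat.cast_succ, ← add_assoc, Real.Gamma_add_one (by positivity), ih, poch_succ]
    ring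

lemma eval_descPochhammer_neg (c : ℝ) (k : ℕ) :
    (descPochhammer ℝ k).eval (-c) = (-1) ^ k * poch c k := by
  rw [← neg_neg c, poch_neg, neg_neg, ← mul_assoc, ← mul_pow]
  norm_num

lemma poch_eq_eval_descPochhammer (c : ℝ) (k : ℕ) :
    poch c k = (descPochhammer ℝ k).eval (c + k - 1) := by
  rw [descPochhammer_eval_eq_ascPochhammer, poch_eq_eval_ascPochhammer]
  ring_nf

/-- Vandermonde's convolution for rising factorials, read off from the falling-factorial one. -/
lemma sum_neg_one_pow_mul_choose_mul_poch (b c : ℝ) (m : ℕ) :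
    ∑ s ∈ range (m + 1), (-1) ^ s * (m.choose s : ℝ) * poch b s * poch (c + s) (m - s) =
      poch (c - b) m := by
  have hsmeval (k : ℕ) (r : ℝ) : (descPochhammer ℤ k).smeval r = (descPochhammer ℝ k).eval r := by
    rw [← aeval_eq_smeval, aeval_def, ← eval_map, descPochhammer_map]
  have hvdm := Ring.descPochhammer_smeval_add (R := ℝ) m (Commute.all (-b) (c + m - 1))
  rw [Nat.sum_antidiagonal_eq_sum_range_succ (fun p q => (m.choose p : ℝ) *
    ((descPochhammer ℤ p).smeval (-b) * (descPochhammer ℤ q).smeval (c + m - 1)))] at hvdm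
  simp only [hsmeval] at hvdm
  rw [poch_eq_eval_descPochhammer, show c - b + m - 1 = -b + (c + m - 1) by ring, hvdm]
  refine sum_congr rfl fun s hs => ?_
  have hsm : s ≤ m := Nat.lt_succ_iff.mp (mem_range.mp hs)
  rw [eval_descPochhammer_neg, poch_eq_eval_descPochhammer (c + s), Nat.cast_sub hsm]
  ring_nf

/-- The Chu–Vandermonde summation of the terminating `₂F₁(-m, b; c; 1)`. -/
lemma sum_poch_neg_natCast_mul_poch_div {c : ℝ} (b : ℝ) (m : ℕ) (hc : poch c m ≠ 0) :
    ∑ l ∈ range (m + 1), poch (-(m : ℝ)) l * poch b l / (l.factorial * poch c l) =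
      poch (c - b) m / poch c m := by
  rw [← sum_neg_one_pow_mul_choose_mul_poch, sum_div]
  refine sum_congr rfl fun l hl => ?_
  have hlm : l ≤ m := Nat.lt_succ_iff.mp (mem_range.mp hl)
  rw [← Nat.add_sub_cancel' hlm, poch_add_nat] at hc ⊢
  rw [Nat.add_sub_cancel_left, poch_neg_natCast, Nat.add_sub_cancel' hlm,
    Nat.descFactorial_eq_factorial_mul_choose]
  have hcl := left_ne_zero_of_mul hc
  have hcl' := right_ne_zero_of_mul hc
  push_cast
  field_simp

/-- Substituting `j = i - s` turns the sum into a Chu–Vandermonde sum over `s ≤ i - t`; the terms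
with `j < t` vanish. -/
lemma sum_poch_ratio_mul_poch_neg_natCast {a c : ℝ} {i n t : ℕ} (hti : t ≤ i) (hin : i ≤ n)
    (hc : poch c (n - t) ≠ 0) :
    ∑ j ∈ range (i + 1), poch (-(i : ℝ)) j / poch (-(n : ℝ)) j *
        (poch a (n - j) / (n - j).factorial *
          (poch (-((n - t : ℕ) : ℝ)) (n - j) / poch c (n - j))) =
      (-1) ^ (n - i) * ((i.choose t : ℝ) / n.choose t) *
        (poch a (n - i) * poch (c - a) (i - t) / poch c (n - t)) := by
  set g : ℕ → ℝ := fun j => poch (-(i : ℝ)) j / poch (-(n : ℝ)) j *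
    (poch a (n - j) / (n - j).factorial * (poch (-((n - t : ℕ) : ℝ)) (n - j) / poch c (n - j)))
  have hsplit : poch c (n - t) = poch c (n - i) * poch (c + (n - i : ℕ)) (i - t) := by
    rw [← poch_add_nat]; congr 1; omega
  have hc₁ : poch c (n - i) ≠ 0 := left_ne_zero_of_mul (hsplit ▸ hc)
  have hc₂ : poch (c + (n - i : ℕ)) (i - t) ≠ 0 := right_ne_zero_of_mul (hsplit ▸ hc)
  set R : ℝ := (-1) ^ (n - i) * i.factorial * (n - t).factorial * poch a (n - i) /
    (n.factorial * (i - t).factorial * poch c (n - i))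
  have hterm : ∀ s ∈ range (i - t + 1), g (i - s) = R * (poch (-((i - t : ℕ) : ℝ)) s *
      poch (a + (n - i : ℕ)) s / (s.factorial * poch (c + (n - i : ℕ)) s)) := by
    intro s hs
    have hs : s ≤ i - t := Nat.lt_succ_iff.mp (mem_range.mp hs)
    have hcs : poch (c + (n - i : ℕ)) s ≠ 0 := poch_ne_zero_of_le hs hc₂
    have hnj : n - (i - s) = (n - i) + s := by omega
    simp only [g, R, hnj]
    rw [poch_neg_natCast_of_le (by omega : i - s ≤ i),
      poch_neg_natCast_of_le (by omega : i - s ≤ n),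
      poch_neg_natCast_of_le (by omega : n - i + s ≤ n - t), poch_neg_natCast_of_le hs,
      poch_add_nat a, poch_add_nat c, show i - (i - s) = s by omega, hnj,
      show n - t - (n - i + s) = i - t - s by omega, pow_add]
    field_simp
  have hvanish : ∀ s ∈ range (i + 1), s ∉ range (i - t + 1) → g (i - s) = 0 := by
    intro s hs hst
    simp only [mem_range] at hs hst
    simp only [g, poch_neg_natCast_of_lt (by omega : n - t < n - (i - s)), zero_div, mul_zero]
  calc ∑ j ∈ range (i + 1), g j = ∑ s ∈ range (i + 1), g (i - s) := by
        rw [← sum_range_reflect g (i + 1), Nat.add_sub_cancel]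
    _ = ∑ s ∈ range (i - t + 1), g (i - s) :=
        (sum_subset (range_subset_range.mpr (by omega)) hvanish).symm
    _ = R * (poch (c + (n - i : ℕ) - (a + (n - i : ℕ))) (i - t) /
          poch (c + (n - i : ℕ)) (i - t)) := by
        rw [sum_congr rfl hterm, ← mul_sum, sum_poch_neg_natCast_mul_poch_div _ _ hc₂]
    _ = _ := by
        rw [add_sub_add_right_eq_sub, hsplit, Nat.cast_choose ℝ hti,
          Nat.cast_choose ℝ (hti.trans hin)]
        simp only [R]
        field_simp

lemma betaF_eq_beta : betaF = ProbabilityTheory.beta := rfl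

lemma betaF_comm (a b : ℝ) : betaF a b = betaF b a := by
  rw [betaF, betaF, mul_comm, add_comm]

lemma betaF_add_natCast {a b : ℝ} (ha : 0 < a) (hb : 0 < b) (k : ℕ) :
    betaF (a + k) b = betaF a b * poch a k / poch (a + b) k := by
  rw [betaF, betaF, add_right_comm, Real.Gamma_add_natCast ha,
    Real.Gamma_add_natCast (by positivity)]
  have := (poch_pos (add_pos ha hb) k).ne'
  have := (Real.Gamma_pos_of_pos (add_pos ha hb)).ne'
  field_simp

lemma ofReal_one_sub_rpow_mul_rpow {x : ℝ} (hx : x ∈ Set.Icc (0 : ℝ) 1) (a b : ℝ) :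
    (((1 - x) ^ a * x ^ b : ℝ) : ℂ) =
      (x : ℂ) ^ (((b + 1 : ℝ) : ℂ) - 1) * (1 - (x : ℂ)) ^ (((a + 1 : ℝ) : ℂ) - 1) := by
  rw [Complex.ofReal_mul, Complex.ofReal_cpow (sub_nonneg.mpr hx.2),
    Complex.ofReal_cpow hx.1]
  push_cast
  ring_nf

lemma intervalIntegrable_one_sub_rpow_mul_rpow {a b : ℝ} (ha : -1 < a) (hb : -1 < b) :
    IntervalIntegrable (fun x : ℝ => (1 - x) ^ a * x ^ b) volume 0 1 := by
  have hC := Complex.betaIntegral_convergent (u := ((b + 1 : ℝ) : ℂ)) (v := ((a + 1 : ℝ) : ℂ))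
    (by simp; linarith) (by simp; linarith)
  refine hC.norm.congr_uIoo fun x hx => ?_
  rw [Set.uIoo_of_le zero_le_one] at hx
  have hx' : x ∈ Set.Icc (0 : ℝ) 1 := Set.Ioo_subset_Icc_self hx
  dsimp only
  rw [← ofReal_one_sub_rpow_mul_rpow hx', Complex.norm_of_nonneg]
  exact mul_nonneg (Real.rpow_nonneg (sub_nonneg.mpr hx'.2) a) (Real.rpow_nonneg hx'.1 b)

lemma integral_one_sub_rpow_mul_rpow {a b : ℝ} (ha : -1 < a) (hb : -1 < b) :
    ∫ x in (0 : ℝ)..1, (1 - x) ^ a * x ^ b = betaF (a + 1) (b + 1) := by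
  have hbeta : Complex.betaIntegral (b + 1 : ℝ) (a + 1 : ℝ) =
      ((∫ x in (0 : ℝ)..1, (1 - x) ^ a * x ^ b : ℝ) : ℂ) := by
    rw [Complex.betaIntegral, ← intervalIntegral.integral_ofReal]
    refine intervalIntegral.integral_congr fun x hx => ?_
    rw [Set.uIcc_of_le zero_le_one] at hx
    exact (ofReal_one_sub_rpow_mul_rpow hx a b).symm
  rw [betaF_comm, betaF_eq_beta,
    ProbabilityTheory.beta_eq_betaIntegralReal _ _ (by linarith) (by linarith), hbeta,
    Complex.ofReal_re]

section JacobiInnerProduct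

variable {α β : ℝ}

lemma jip_comm (f g : ℝ → ℝ) : jip α β f g = jip α β g f := by
  simp only [jip, mul_right_comm _ (f _)]

lemma intervalIntegrable_jip_integrand (hα : -1 < α) (hβ : -1 < β) {f g : ℝ → ℝ}
    (hf : Continuous f) (hg : Continuous g) :
    IntervalIntegrable (fun x => (1 - x) ^ α * x ^ β * f x * g x) volume 0 1 := by
  simpa only [mul_assoc, Pi.mul_apply] using
    (intervalIntegrable_one_sub_rpow_mul_rpow hα hβ).mul_continuousOn (hf.mul hg).continuousOn

lemma jip_sum_left (hα : -1 < α) (hβ : -1 < β) {ι : Type*} (s : Finset ι) (c : ι → ℝ)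
    {f : ι → ℝ → ℝ} (hf : ∀ k, Continuous (f k)) {g : ℝ → ℝ} (hg : Continuous g) :
    jip α β (fun x => ∑ k ∈ s, c k * f k x) g = ∑ k ∈ s, c k * jip α β (f k) g := by
  simp only [jip, mul_sum, sum_mul, ← intervalIntegral.integral_const_mul]
  rw [intervalIntegral.integral_finsetSum fun k _ =>
    ((intervalIntegrable_jip_integrand hα hβ (hf k) hg).const_mul (c k)).congr_uIoo fun x _ => by
      dsimp only; ring]
  exact sum_congr rfl fun k _ => intervalIntegral.integral_congr fun x _ => by ring

lemma jip_sub_left (hα : -1 < α) (hβ : -1 < β) {f f' g : ℝ → ℝ} (hf : Continuous f)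
    (hf' : Continuous f') (hg : Continuous g) :
    jip α β (fun x => f x - f' x) g = jip α β f g - jip α β f' g := by
  rw [jip, jip, jip, ← intervalIntegral.integral_sub (intervalIntegrable_jip_integrand hα hβ hf hg)
    (intervalIntegrable_jip_integrand hα hβ hf' hg)]
  exact intervalIntegral.integral_congr fun x _ => by ring

lemma jip_one_sub_pow_pow (hα : -1 < α) (hβ : -1 < β) (k t : ℕ) :
    jip α β (fun x => (1 - x) ^ k) (fun x => x ^ t) = betaF (α + 1 + k) (β + 1 + t) := by
  rw [jip, add_right_comm α, add_right_comm β, ← integral_one_sub_rpow_mul_rpow (by linarith)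
    (by linarith)]
  refine intervalIntegral.integral_congr_Ioo_of_le zero_le_one fun x hx => ?_
  rw [Real.rpow_add (by linarith [hx.2]), Real.rpow_add hx.1, Real.rpow_natCast, Real.rpow_natCast]
  ring

end JacobiInnerProduct

/-- The weight is positive on `(0, 1)`, where a nonzero polynomial vanishes only finitely often. -/
lemma Polynomial.eq_zero_of_jip_self_eq_zero {α β : ℝ} (hα : -1 < α) (hβ : -1 < β) {P : ℝ[X]}
    (h : jip α β (fun x => P.eval x) (fun x => P.eval x) = 0) : P = 0 := by
  by_contra hP
  set F : ℝ → ℝ := fun x => (1 - x) ^ α * x ^ β * P.eval x * P.eval x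
  have hF : ∀ x ∈ Set.Ioo (0 : ℝ) 1, F x = (1 - x) ^ α * x ^ β * P.eval x ^ 2 := fun x _ => by
    simp only [F]; ring
  have hnonneg : 0 ≤ᵐ[volume.restrict (Set.uIoc 0 1)] F := by
    refine ae_restrict_of_forall_mem measurableSet_uIoc fun x hx => ?_
    rw [Set.uIoc_of_le zero_le_one] at hx
    have : 0 ≤ (1 - x) ^ α * x ^ β :=
      mul_nonneg (Real.rpow_nonneg (by linarith [hx.2]) α) (Real.rpow_nonneg hx.1.le β)
    simpa only [F, Pi.zero_apply, mul_assoc] using mul_nonneg this (mul_self_nonneg (P.eval x))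
  have hsupp : Set.Ioo (0 : ℝ) 1 \ {x | P.IsRoot x} ⊆ Function.support F ∩ Set.Ioc 0 1 := by
    rintro x ⟨hx, hroot⟩
    refine ⟨?_, Set.Ioo_subset_Ioc_self hx⟩
    rw [Function.mem_support, hF x hx]
    exact mul_ne_zero (mul_ne_zero (Real.rpow_pos_of_pos (by linarith [hx.2]) α).ne'
      (Real.rpow_pos_of_pos hx.1 β).ne') (pow_ne_zero 2 hroot)
  have hpos : 0 < volume (Function.support F ∩ Set.Ioc 0 1) := by
    refine lt_of_lt_of_le ?_ (measure_mono hsupp)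
    rw [measure_sdiff_null ((finite_setOfPred_isRoot hP).measure_zero _), Real.volume_Ioo]
    norm_num
  have := (intervalIntegral.integral_pos_iff_support_of_nonneg_ae' hnonneg
    (intervalIntegrable_jip_integrand hα hβ P.continuous P.continuous)).mpr ⟨zero_lt_one, hpos⟩
  exact this.ne' h

lemma Polynomial.eq_of_jip_pow_eq {α β : ℝ} (hα : -1 < α) (hβ : -1 < β) {n : ℕ} {P Q : ℝ[X]}
    (hP : P.natDegree ≤ n) (hQ : Q.natDegree ≤ n)
    (h : ∀ t ≤ n, jip α β (fun x => P.eval x) (fun x => x ^ t) =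
      jip α β (fun x => Q.eval x) (fun x => x ^ t)) : P = Q := by
  set R := P - Q
  have hR : R.natDegree ≤ n := (natDegree_sub_le P Q).trans (max_le hP hQ)
  have hRpow : ∀ t ≤ n, jip α β (fun x => R.eval x) (fun x => x ^ t) = 0 := fun t ht => by
    simp only [R, eval_sub]
    rw [jip_sub_left hα hβ P.continuous Q.continuous (by fun_prop), h t ht, sub_self]
  have hexp : (fun x => R.eval x) = fun x => ∑ t ∈ range (n + 1), R.coeff t * x ^ t := by
    funext x
    exact eval_eq_sum_range' (Nat.lt_succ_of_le hR) x
  refine sub_eq_zero.mp (eq_zero_of_jip_self_eq_zero hα hβ ?_)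
  nth_rewrite 1 [hexp]
  rw [jip_sum_left hα hβ _ _ (fun t => by fun_prop) R.continuous]
  refine sum_eq_zero fun t ht => ?_
  rw [jip_comm, hRpow t (Nat.lt_succ_iff.mp (mem_range.mp ht)), mul_zero]

lemma sum_bern (n : ℕ) (x : ℝ) : ∑ k ∈ range (n + 1), bern n k x = 1 := by
  have h := add_pow x (1 - x) n
  rw [add_sub_cancel, one_pow] at h
  rw [h]
  exact sum_congr rfl fun k _ => by rw [bern]; ring

lemma choose_mul_pow_eq_sum_choose_mul_bern {n t : ℕ} (ht : t ≤ n) (x : ℝ) :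
    (n.choose t : ℝ) * x ^ t = ∑ k ∈ range (n + 1), (k.choose t : ℝ) * bern n k x := by
  have hterm (u : ℕ) : ((t + u).choose t : ℝ) * bern n (t + u) x =
      n.choose t * x ^ t * bern (n - t) u x := by
    have hchoose : (n.choose (t + u) : ℝ) * (t + u).choose t = n.choose t * (n - t).choose u := by
      exact_mod_cast Nat.add_sub_cancel_left t u ▸ Nat.choose_mul (n := n) (Nat.le_add_right t u)
    rw [bern, bern, Nat.sub_sub, pow_add]
    linear_combination (x ^ t * x ^ u * (1 - x) ^ (n - (t + u))) * hchoose
  rw [show n + 1 = t + (n - t + 1) by omega, sum_range_add, sum_eq_zero fun k hk => by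
    rw [Nat.choose_eq_zero_of_lt (mem_range.mp hk), Nat.cast_zero, zero_mul], zero_add,
    sum_congr rfl fun u _ => hterm u, ← mul_sum, sum_bern, mul_one]

lemma continuous_bern (n k : ℕ) : Continuous (bern n k) := by
  unfold bern
  fun_prop

lemma jip_pow_of_isDual {α β : ℝ} (hα : -1 < α) (hβ : -1 < β) {f : ℝ → ℝ} (hf : Continuous f)
    {n i : ℕ} (hi : i ≤ n) (hdual : ∀ j ≤ n, jip α β f (bern n j) = if i = j then 1 else 0)
    {t : ℕ} (ht : t ≤ n) :
    jip α β f (fun x => x ^ t) = (i.choose t : ℝ) / n.choose t := by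
  have hnt : (n.choose t : ℝ) ≠ 0 := by exact_mod_cast (Nat.choose_pos ht).ne'
  have hpow : (fun x : ℝ => x ^ t) =
      fun x => ∑ k ∈ range (n + 1), (k.choose t : ℝ) / n.choose t * bern n k x := by
    funext x
    apply mul_left_cancel₀ hnt
    rw [choose_mul_pow_eq_sum_choose_mul_bern ht, mul_sum]
    exact sum_congr rfl fun k _ => by field_simp
  rw [hpow, jip_comm, jip_sum_left hα hβ _ _ (continuous_bern n) hf]
  rw [sum_congr rfl fun k hk => by rw [jip_comm, hdual k (Nat.lt_succ_iff.mp (mem_range.mp hk))]]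
  simp [Nat.lt_succ_of_le hi]

lemma continuous_sjac (m : ℕ) (a b : ℝ) : Continuous (sjac m a b) := by
  unfold sjac
  fun_prop

lemma jip_sjac_pow {α β : ℝ} (hα : -1 < α) (hβ : -1 < β) (m t : ℕ) (b : ℝ) :
    jip α β (sjac m α b) (fun x => x ^ t) =
      poch (α + 1) m / m.factorial * betaF (α + 1) (β + 1 + t) *
        (poch (β + t + 1 - m - b) m / poch (α + β + 2 + t) m) := by
  have hα1 : 0 < α + 1 := by linarith
  have hβt : 0 < β + 1 + t := add_pos_of_pos_of_nonneg (by linarith) t.cast_nonneg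
  have hc : α + β + 2 + t = α + 1 + (β + 1 + t) := by ring
  have hsjac : sjac m α b = fun x => ∑ k ∈ range (m + 1),
      poch (α + 1) m / m.factorial * (poch (-(m : ℝ)) k * poch (m + α + b + 1) k /
        (k.factorial * poch (α + 1) k)) * (1 - x) ^ k := by
    funext x
    simp only [sjac, mul_sum, mul_assoc]
  rw [hsjac, jip_sum_left hα hβ _ _ (fun k => by fun_prop) (by fun_prop), hc,
    show β + t + 1 - m - b = α + 1 + (β + 1 + t) - (m + α + b + 1) by ring,
    ← sum_poch_neg_natCast_mul_poch_div _ m (poch_pos (by positivity) m).ne', mul_sum]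
  refine sum_congr rfl fun k _ => ?_
  rw [jip_one_sub_pow_pow hα hβ, betaF_add_natCast hα1 hβt]
  have := (poch_pos hα1 k).ne'
  have := (poch_pos (add_pos hα1 hβt) k).ne'
  field_simp

noncomputable def sjacPoly (m : ℕ) (a b : ℝ) : ℝ[X] :=
  C (poch (a + 1) m / m.factorial) * ∑ k ∈ range (m + 1),
    C (poch (-(m : ℝ)) k * poch (m + a + b + 1) k / (k.factorial * poch (a + 1) k)) * (1 - X) ^ k

lemma eval_sjacPoly (m : ℕ) (a b x : ℝ) : (sjacPoly m a b).eval x = sjac m a b x := by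
  simp [sjacPoly, sjac, eval_finsetSum]

lemma natDegree_sjacPoly_le (m : ℕ) (a b : ℝ) : (sjacPoly m a b).natDegree ≤ m := by
  refine (natDegree_C_mul_le _ _).trans (natDegree_sum_le_of_forall_le _ _ fun k hk => ?_)
  have hX : (1 - X : ℝ[X]).natDegree ≤ 1 := (natDegree_sub_le _ _).trans (by simp)
  refine (natDegree_C_mul_le _ _).trans ((natDegree_pow_le_of_le k hX).trans ?_)
  simpa using Nat.lt_succ_iff.mp (mem_range.mp hk)

noncomputable def dualBernsteinShort (α β : ℝ) (n i : ℕ) : ℝ[X] :=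
  C ((-1) ^ (n - i) * poch (α + β + 2) n /
      (betaF (α + 1) (β + 1) * poch (α + 1) (n - i) * poch (β + 1) i)) *
    ∑ j ∈ range (i + 1), C (poch (-(i : ℝ)) j / poch (-(n : ℝ)) j) * sjacPoly (n - j) α (β + j + 1)

lemma eval_dualBernsteinShort (α β : ℝ) (n i : ℕ) (x : ℝ) :
    (dualBernsteinShort α β n i).eval x =
      (-1) ^ (n - i) * poch (α + β + 2) n /
          (betaF (α + 1) (β + 1) * poch (α + 1) (n - i) * poch (β + 1) i) *
        ∑ j ∈ range (i + 1),
          poch (-(i : ℝ)) j / poch (-(n : ℝ)) j * sjac (n - j) α (β + j + 1) x := by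
  simp [dualBernsteinShort, eval_finsetSum, eval_sjacPoly]

lemma natDegree_dualBernsteinShort_le (α β : ℝ) (n i : ℕ) :
    (dualBernsteinShort α β n i).natDegree ≤ n :=
  (natDegree_C_mul_le _ _).trans (natDegree_sum_le_of_forall_le _ _ fun j _ =>
    (natDegree_C_mul_le _ _).trans ((natDegree_sjacPoly_le _ _ _).trans (Nat.sub_le n j)))

lemma jip_dualBernsteinShort_pow_eq_sum {α β : ℝ} (hα : -1 < α) (hβ : -1 < β) {n i t : ℕ}
    (hi : i ≤ n) (ht : t ≤ n) :
    jip α β (fun x => (dualBernsteinShort α β n i).eval x) (fun x => x ^ t) =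
      (-1) ^ (n - i) * poch (α + β + 2) n /
          (betaF (α + 1) (β + 1) * poch (α + 1) (n - i) * poch (β + 1) i) *
        betaF (α + 1) (β + 1 + t) * ∑ j ∈ range (i + 1), poch (-(i : ℝ)) j / poch (-(n : ℝ)) j *
          (poch (α + 1) (n - j) / (n - j).factorial *
            (poch (-((n - t : ℕ) : ℝ)) (n - j) / poch (α + β + 2 + t) (n - j))) := by
  set K : ℝ := (-1) ^ (n - i) * poch (α + β + 2) n /
    (betaF (α + 1) (β + 1) * poch (α + 1) (n - i) * poch (β + 1) i)
  have hexp : (fun x => (dualBernsteinShort α β n i).eval x) = fun x => ∑ j ∈ range (i + 1),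
      K * (poch (-(i : ℝ)) j / poch (-(n : ℝ)) j) * sjac (n - j) α (β + j + 1) x := by
    funext x
    simp only [eval_dualBernsteinShort, mul_sum, mul_assoc, K]
  rw [hexp, jip_sum_left hα hβ _ _ (fun j => continuous_sjac _ _ _) (by fun_prop), mul_sum]
  refine sum_congr rfl fun j hj => ?_
  have hjn : j ≤ n := (Nat.lt_succ_iff.mp (mem_range.mp hj)).trans hi
  have hshift : β + t + 1 - ((n - j : ℕ) : ℝ) - (β + j + 1) = -((n - t : ℕ) : ℝ) := by
    push_cast [Nat.cast_sub hjn, Nat.cast_sub ht]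
    ring
  rw [jip_sjac_pow hα hβ, hshift]
  ring

lemma jip_dualBernsteinShort_pow {α β : ℝ} (hα : -1 < α) (hβ : -1 < β) {n i t : ℕ} (hi : i ≤ n)
    (ht : t ≤ n) :
    jip α β (fun x => (dualBernsteinShort α β n i).eval x) (fun x => x ^ t) =
      (i.choose t : ℝ) / n.choose t := by
  rw [jip_dualBernsteinShort_pow_eq_sum hα hβ hi ht]
  rcases le_or_gt t i with hti | hit
  · have hα1 : 0 < α + 1 := by linarith
    have hβ1 : 0 < β + 1 := by linarith
    have hσ : 0 < α + β + 2 := by linarith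
    have hB : betaF (α + 1) (β + 1 + t) =
        betaF (α + 1) (β + 1) * poch (β + 1) t / poch (α + β + 2) t := by
      rw [betaF_comm, betaF_add_natCast hβ1 hα1, betaF_comm,
        show β + 1 + (α + 1) = α + β + 2 by ring]
    have hβi : poch (β + 1) i = poch (β + 1) t * poch (β + 1 + t) (i - t) := by
      rw [← poch_add_nat, Nat.add_sub_cancel' hti]
    have hσn : poch (α + β + 2) n = poch (α + β + 2) t * poch (α + β + 2 + t) (n - t) := by
      rw [← poch_add_nat, Nat.add_sub_cancel' ht]
    rw [sum_poch_ratio_mul_poch_neg_natCast hti hi (poch_pos (by positivity) _).ne',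
      show α + β + 2 + t - (α + 1) = β + 1 + t by ring, hB, hβi, hσn]
    have : betaF (α + 1) (β + 1) ≠ 0 := (betaF_eq_beta ▸ ProbabilityTheory.beta_pos hα1 hβ1).ne'
    have := (poch_pos hα1 (n - i)).ne'
    have := (poch_pos hβ1 t).ne'
    have := (poch_pos hσ t).ne'
    have := (poch_pos (by positivity : 0 < β + 1 + t) (i - t)).ne'
    have := (poch_pos (by positivity : 0 < α + β + 2 + t) (n - t)).ne'
    have hsign : ((-1 : ℝ) ^ (n - i)) ^ 2 = 1 := by
      rw [← pow_mul, mul_comm, pow_mul, neg_one_sq, one_pow]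
    field_simp
    simp [hsign]
  · rw [sum_eq_zero fun j hj => ?_, Nat.choose_eq_zero_of_lt hit]
    · simp
    · rw [poch_neg_natCast_of_lt (m := n - t) (l := n - j) (by have := mem_range.mp hj; omega)]
      simp

theorem dual_bernstein_short_expansion (α β : ℝ) (hα : α > -1) (hβ : β > -1)
    (n i : ℕ) (hi : i ≤ n) (D : Polynomial ℝ) (hdeg : D.natDegree ≤ n)
    (hdual : ∀ j ≤ n, jip α β (fun x => D.eval x) (bern n j) = if i = j then 1 else 0)
    (x : ℝ) :
    D.eval x =
      ((-1 : ℝ) ^ (n - i) * poch (α + β + 2) n /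
          (betaF (α + 1) (β + 1) * poch (α + 1) (n - i) * poch (β + 1) i)) *
        ∑ j ∈ Finset.range (i + 1),
          poch (-(i : ℝ)) j / poch (-(n : ℝ)) j * sjac (n - j) α (β + (j : ℝ) + 1) x := by
  have hD : D = dualBernsteinShort α β n i :=
    eq_of_jip_pow_eq hα hβ hdeg (natDegree_dualBernsteinShort_le α β n i) fun t ht => by
      rw [jip_pow_of_isDual hα hβ D.continuous hi hdual ht, jip_dualBernsteinShort_pow hα hβ hi ht]
  rw [hD, eval_dualBernsteinShort]
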